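/- Let ∇ ⊂ ℝ⁴ be defined by x,y,z ≥ 0, w ≥ 0, x+y-z ≥ 0, 1-x-y-w ≥ 0. For every positive integer n, the number of lattice points in n∇ equals C(n+4,4) + C(n+3,4) = (2n⁴ + 16n³ + 46n² + 56n + 24)/24. -/

import Mathlib

open Pointwise

def nabla : Set (ℝ × ℝ × ℝ × ℝ) :=
  {p : ℝ × ℝ × ℝ × ℝ |
    0 ≤ p.1 ∧
    0 ≤ p.2.1 ∧
    0 ≤ p.2.2.1 ∧
    0 ≤ p.2.2.2 ∧
    0 ≤ p.1 + p.2.1 - p.2.2.1 ∧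
    0 ≤ 1 - p.1 - p.2.1 - p.2.2.2}

/-!
The hyperplane `z = x` cuts `∇` into two unimodular simplices. On lattice points of `n∇`, the
part `z ≤ x` is the image of the standard simplex `{c + e + b + d ≤ n}` under
`(c, e, b, d) ↦ (c + e, b, c, d)`, and the part `x < z` is the image of the smaller simplex
`{a + f + g + d ≤ n - 1}` under `(a, f, g, d) ↦ (a, f + g + 1, a + f + 1, d)`. The standard
simplex is counted one coordinate at a time with the hockey-stick identity.
-/

open Finset

theorem sum_range_succ_add_choose (n k : ℕ) :
    ∑ j ∈ range n, (j + 1 + k).choose (k + 1) = (n + k + 1).choose (k + 2) := by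
  cases n with
  | zero => simp
  | succ m =>
    convert Nat.sum_range_add_choose m (k + 1) using 2 <;> ring_nf

theorem card_range_prod_filter_add_lt {β : Type*} (s : Finset β) (f : β → ℕ) {N k : ℕ}
    (hs : ∀ m ≤ N, #{y ∈ s | f y < m} = (m + k).choose (k + 1)) {n : ℕ} (hn : n ≤ N) :
    #{x ∈ range N ×ˢ s | x.1 + f x.2 < n} = (n + k + 1).choose (k + 2) := by
  have fiber (a : ℕ) :
      (∑ y ∈ s, if a + f y < n then 1 else 0) = (n - a + k).choose (k + 1) := by
    rw [← card_filter, ← hs (n - a) (by omega)]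
    exact congrArg card (filter_congr fun y _ ↦ by omega)
  calc #{x ∈ range N ×ˢ s | x.1 + f x.2 < n}
      = ∑ a ∈ range N, (n - a + k).choose (k + 1) := by
        rw [card_filter, sum_product]
        simp only [fiber]
    _ = ∑ a ∈ range n, (n - a + k).choose (k + 1) := by
      refine (sum_subset (range_subset_range.2 hn) fun a _ ha ↦ ?_).symm
      simp only [mem_range, not_lt] at ha
      simp [Nat.sub_eq_zero_of_le ha]
    _ = ∑ j ∈ range n, (j + 1 + k).choose (k + 1) := by
      rw [← sum_range_reflect]
      refine sum_congr rfl fun j hj ↦ ?_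
      simp only [mem_range] at hj
      congr 2
      omega
    _ = (n + k + 1).choose (k + 2) := sum_range_succ_add_choose n k

-- Coordinate sum `< n` rather than `≤ n - 1`, so that `n = 0` needs no special case.
def simplexPoints (n : ℕ) : Finset (ℕ × ℕ × ℕ × ℕ) :=
  {x ∈ range n ×ˢ range n ×ˢ range n ×ˢ range n | x.1 + (x.2.1 + (x.2.2.1 + x.2.2.2)) < n}

theorem mem_simplexPoints {n : ℕ} {x : ℕ × ℕ × ℕ × ℕ} :
    x ∈ simplexPoints n ↔ x.1 + x.2.1 + x.2.2.1 + x.2.2.2 < n := by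
  simp only [simplexPoints, mem_filter, mem_product, mem_range]
  omega

theorem card_simplexPoints (n : ℕ) : #(simplexPoints n) = (n + 3).choose 4 := by
  have h1 : ∀ m ≤ n, #{y ∈ range n | y < m} = (m + 0).choose (0 + 1) := fun m hm ↦ by
    rw [range_eq_Ico, Ico_filter_lt, min_eq_right hm]
    simp
  have h2 := fun m ↦ card_range_prod_filter_add_lt (range n) id h1 (n := m)
  have h3 := fun m ↦
    card_range_prod_filter_add_lt (range n ×ˢ range n) (fun y ↦ y.1 + y.2) h2 (n := m)
  exact card_range_prod_filter_add_lt (range n ×ˢ range n ×ˢ range n)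
    (fun y ↦ y.1 + (y.2.1 + y.2.2)) h3 le_rfl

theorem mem_smul_nabla_iff {t : ℝ} (ht : 0 ≤ t) {p : ℝ × ℝ × ℝ × ℝ} :
    p ∈ t • nabla ↔ 0 ≤ p.1 ∧ 0 ≤ p.2.1 ∧ 0 ≤ p.2.2.1 ∧ 0 ≤ p.2.2.2 ∧
      p.2.2.1 ≤ p.1 + p.2.1 ∧ p.1 + p.2.1 + p.2.2.2 ≤ t := by
  obtain ⟨x, y, z, w⟩ := p
  rcases ht.eq_or_lt with rfl | ht
  · rw [Set.zero_smul_set ⟨0, by simp [nabla]⟩, Set.mem_zero]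
    simp only [Prod.mk_eq_zero]
    constructor
    · rintro ⟨rfl, rfl, rfl, rfl⟩
      norm_num
    · rintro ⟨hx, hy, hz, hw, hzxy, hsum⟩
      refine ⟨?_, ?_, ?_, ?_⟩ <;> linarith
  · have hscale (a : ℝ) : 0 ≤ t⁻¹ * a ↔ 0 ≤ a := mul_nonneg_iff_of_pos_left (inv_pos.2 ht)
    have hone : (1 : ℝ) = t⁻¹ * t := (inv_mul_cancel₀ ht.ne').symm
    rw [Set.mem_smul_set_iff_inv_smul_mem₀ ht.ne']
    simp only [nabla, Set.mem_ofPred_eq, Prod.smul_mk, smul_eq_mul]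
    rw [← mul_add, ← mul_sub, hone, ← mul_sub, ← mul_sub, ← mul_sub]
    simp only [hscale, sub_nonneg]
    constructor <;> rintro ⟨h1, h2, h3, h4, h5, h6⟩ <;>
      exact ⟨h1, h2, h3, h4, h5, by linarith⟩

theorem intCast_mem_smul_nabla_iff (n : ℕ) (v : ℤ × ℤ × ℤ × ℤ) :
    ((v.1 : ℝ), (v.2.1 : ℝ), (v.2.2.1 : ℝ), (v.2.2.2 : ℝ)) ∈ (n : ℝ) • nabla ↔
      0 ≤ v.1 ∧ 0 ≤ v.2.1 ∧ 0 ≤ v.2.2.1 ∧ 0 ≤ v.2.2.2 ∧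
        v.2.2.1 ≤ v.1 + v.2.1 ∧ v.1 + v.2.1 + v.2.2.2 ≤ n := by
  rw [mem_smul_nabla_iff n.cast_nonneg]
  dsimp only
  norm_cast

def lowerChart (x : ℕ × ℕ × ℕ × ℕ) : ℤ × ℤ × ℤ × ℤ :=
  (x.1 + x.2.1, x.2.2.1, x.1, x.2.2.2)

def upperChart (x : ℕ × ℕ × ℕ × ℕ) : ℤ × ℤ × ℤ × ℤ :=
  (x.1, x.2.1 + x.2.2.1 + 1, x.1 + x.2.1 + 1, x.2.2.2)

theorem lowerChart_injective : Function.Injective lowerChart := by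
  rintro ⟨a, b, c, d⟩ ⟨a', b', c', d'⟩ h
  simp only [lowerChart, Prod.mk.injEq] at h ⊢
  omega

theorem upperChart_injective : Function.Injective upperChart := by
  rintro ⟨a, b, c, d⟩ ⟨a', b', c', d'⟩ h
  simp only [upperChart, Prod.mk.injEq] at h ⊢
  omega

theorem disjoint_range_lowerChart_upperChart :
    Disjoint (Set.range lowerChart) (Set.range upperChart) := by
  rw [Set.disjoint_left]
  rintro _ ⟨x, rfl⟩ ⟨y, h⟩
  simp only [lowerChart, upperChart, Prod.mk.injEq] at h
  omega

theorem lattice_smul_nabla_eq (n : ℕ) :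
    {v : ℤ × ℤ × ℤ × ℤ |
        ((v.1 : ℝ), (v.2.1 : ℝ), (v.2.2.1 : ℝ), (v.2.2.2 : ℝ)) ∈ (n : ℝ) • nabla} =
      lowerChart '' simplexPoints (n + 1) ∪ upperChart '' simplexPoints n := by
  ext ⟨a, b, c, d⟩
  simp only [Set.mem_ofPred_eq, intCast_mem_smul_nabla_iff, Set.mem_union, Set.mem_image,
    Finset.mem_coe, mem_simplexPoints, Prod.exists, lowerChart, upperChart, Prod.mk.injEq]
  constructor
  · rintro ⟨ha, hb, hc, hd, hcab, habd⟩
    by_cases hca : c ≤ a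
    · exact Or.inl ⟨c.toNat, (a - c).toNat, b.toNat, d.toNat, by omega, by omega⟩
    · exact Or.inr
        ⟨a.toNat, (c - a - 1).toNat, (b - (c - a)).toNat, d.toNat, by omega, by omega⟩
  · rintro (⟨x, y, z, w, h, rfl, rfl, rfl, rfl⟩ | ⟨x, y, z, w, h, rfl, rfl, rfl, rfl⟩) <;> omega

theorem ncard_lattice_smul_nabla (n : ℕ) :
    {v : ℤ × ℤ × ℤ × ℤ |
        ((v.1 : ℝ), (v.2.1 : ℝ), (v.2.2.1 : ℝ), (v.2.2.2 : ℝ)) ∈ (n : ℝ) • nabla}.ncard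
      = (n + 4).choose 4 + (n + 3).choose 4 := by
  rw [lattice_smul_nabla_eq, Set.ncard_union_eq,
    Set.ncard_image_of_injective _ lowerChart_injective,
    Set.ncard_image_of_injective _ upperChart_injective,
    Set.ncard_coe_finset, Set.ncard_coe_finset, card_simplexPoints, card_simplexPoints]
  exact disjoint_range_lowerChart_upperChart.mono (Set.image_subset_range _ _)
    (Set.image_subset_range _ _)

theorem cast_choose_four (m : ℕ) :
    (m.choose 4 : ℚ) = m * (m - 1) * (m - 2) * (m - 3) / 24 := by
  rw [Nat.cast_choose_eq_descPochhammer_div]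
  simp [descPochhammer_succ_eval, Nat.factorial]

theorem stmt9_general (n : ℕ) :
    {v : ℤ × ℤ × ℤ × ℤ | (((v.1 : ℝ), (v.2.1 : ℝ), (v.2.2.1 : ℝ), (v.2.2.2 : ℝ)) : ℝ × ℝ × ℝ × ℝ) ∈ (n : ℝ) • nabla}.ncard
        = Nat.choose (n + 4) 4 + Nat.choose (n + 3) 4 ∧
      ((Nat.choose (n + 4) 4 + Nat.choose (n + 3) 4 : ℚ))
        = (2 * (n : ℚ) ^ 4 + 16 * (n : ℚ) ^ 3 + 46 * (n : ℚ) ^ 2 + 56 * (n : ℚ) ^ 1 + 24) / 24 := by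
  refine ⟨ncard_lattice_smul_nabla n, ?_⟩
  rw [cast_choose_four, cast_choose_four]
  push_cast
  ring

theorem stmt9 (n : ℕ) (hn : 0 < n) :
    {v : ℤ × ℤ × ℤ × ℤ | (((v.1 : ℝ), (v.2.1 : ℝ), (v.2.2.1 : ℝ), (v.2.2.2 : ℝ)) : ℝ × ℝ × ℝ × ℝ) ∈ (n : ℝ) • nabla}.ncard
        = Nat.choose (n + 4) 4 + Nat.choose (n + 3) 4 ∧
      ((Nat.choose (n + 4) 4 + Nat.choose (n + 3) 4 : ℚ))
        = (2 * (n : ℚ) ^ 4 + 16 * (n : ℚ) ^ 3 + 46 * (n : ℚ) ^ 2 + 56 * (n : ℚ) ^ 1 + 24) / 24 :=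
  stmt9_general n
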